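/- For every n ≥ 4, there exists a graph G on n vertices such that both G and its complement are connected and tpc(G) = tpc(complement of G) = 3; hence the lower bound tpc(G) + tpc(complement of G) ≥ 6 is sharp. -/

import Mathlib

/-- Interleave two lists, starting with the first. -/
def List.interleave' {α : Type*} : List α → List α → List α
  | [], ys => ys
  | x :: xs, ys => x :: List.interleave' ys xs
termination_by xs ys => xs.length + ys.length

namespace SimpleGraph

variable {V : Type*} {α : Type*} {G : SimpleGraph V}

/-- The sequence of colors `cE e₀, cV v₁, cE e₁, cV v₂, …, cE e_{m-1}` of the edges and
internal vertices of a walk, in order. -/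
def Walk.totalColorSeq (cV : V → α) (cE : Sym2 V → α) {u v : V} (p : G.Walk u v) : List α :=
  (p.edges.map cE).interleave' (p.support.tail.dropLast.map cV)

/-- A walk is total-proper if in its color sequence, any two entries at distance 1 or 2
are distinct.  This says exactly that adjacent edges get distinct colors, adjacent internal
vertices get distinct colors, and every internal vertex gets a color distinct from those of
its incident edges on the walk. -/
def Walk.IsTotalProper (cV : V → α) (cE : Sym2 V → α) {u v : V} (p : G.Walk u v) : Prop :=
  ∀ i a b, (p.totalColorSeq cV cE)[i]? = some a →
    ((p.totalColorSeq cV cE)[i + 1]? = some b ∨ (p.totalColorSeq cV cE)[i + 2]? = some b) →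
    a ≠ b

/-- A total coloring (given by a vertex coloring `cV` and an edge coloring `cE`) makes `G`
total-proper connected if every two distinct vertices are joined by a total-proper path. -/
def IsTPCColoring (G : SimpleGraph V) (cV : V → α) (cE : Sym2 V → α) : Prop :=
  ∀ u v : V, u ≠ v → ∃ p : G.Walk u v, p.IsPath ∧ p.IsTotalProper cV cE

/-- The total-proper connection number: the minimum number of colors in a total coloring
making `G` total-proper connected. -/
noncomputable def tpc (G : SimpleGraph V) : ℕ :=
  sInf {k | ∃ (cV : V → Fin k) (cE : Sym2 V → Fin k), G.IsTPCColoring cV cE}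

end SimpleGraph

/-!
Take `G = Pₙ`. Colouring the `k`-th entry of the sequence `v₀, v₀v₁, v₁, v₁v₂, …` by `k mod 3`
makes every subpath total-proper, in either direction. For `n ≥ 4` the odd vertices in
increasing order followed by the even ones form a Hamiltonian path `Pₙ → Pₙᶜ`, along which
`Pₙᶜ` inherits such a colouring. Conversely, two distinct non-adjacent vertices are joined
only by paths of length at least two, whose first three colour entries are pairwise distinct.
-/

namespace List

variable {α : Type*}

theorem length_interleave' : ∀ xs ys : List α,
    (xs.interleave' ys).length = xs.length + ys.length
  | [], ys => by simp [interleave']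
  | x :: xs, ys => by simp only [interleave', length_cons, length_interleave' ys xs]; omega
termination_by xs ys => xs.length + ys.length

def IsTotalProper (l : List α) : Prop :=
  ∀ i a b, l[i]? = some a → (l[i + 1]? = some b ∨ l[i + 2]? = some b) → a ≠ b

theorem isTotalProper_iff {l : List α} :
    l.IsTotalProper ↔ ∀ i j (_ : i < j) (hj : j < l.length), j ≤ i + 2 → l[i] ≠ l[j] := by
  constructor
  · intro h i j hij hj hji
    obtain rfl | rfl : j = i + 1 ∨ j = i + 2 := by omega
    · exact h i _ _ (getElem?_eq_getElem _) (.inl (getElem?_eq_getElem hj))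
    · exact h i _ _ (getElem?_eq_getElem _) (.inr (getElem?_eq_getElem hj))
  · rintro h i a b ha hb
    obtain ⟨hi, rfl⟩ := getElem?_eq_some_iff.mp ha
    rcases hb with hb | hb <;> obtain ⟨hj, rfl⟩ := getElem?_eq_some_iff.mp hb
    · exact h i (i + 1) (by omega) hj (by omega)
    · exact h i (i + 2) (by omega) hj (by omega)

theorem IsTotalProper.reverse {l : List α} (h : l.IsTotalProper) : l.reverse.IsTotalProper := by
  rw [isTotalProper_iff] at h ⊢
  intro i j hij hj hji
  simp only [getElem_reverse, length_reverse] at hj ⊢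
  exact (h _ _ (by omega) (by omega) (by omega)).symm

theorem IsTotalProper.three_le_card [Fintype α] {l : List α} (h : l.IsTotalProper)
    (hl : 3 ≤ l.length) : 3 ≤ Fintype.card α := by
  have hinj : Function.Injective fun i : Fin 3 => l[(i : ℕ)] := by
    intro i j hij
    by_contra hne
    rcases Nat.lt_or_gt_of_ne (Fin.val_ne_of_ne hne) with hlt | hlt
    · exact isTotalProper_iff.mp h i j hlt (by omega) (by omega) hij
    · exact isTotalProper_iff.mp h j i hlt (by omega) (by omega) hij.symm
  simpa using Fintype.card_le_of_injective _ hinj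

theorem isTotalProper_of_getElem_eq_add {l : List (Fin 3)} (c : ℕ)
    (h : ∀ k (hk : k < l.length), l[k] = Fin.ofNat 3 (c + k)) : l.IsTotalProper := by
  rw [isTotalProper_iff]
  intro i j hij hj hji heq
  rw [h i, h j, Fin.ext_iff, Fin.val_ofNat, Fin.val_ofNat] at heq
  omega

end List

namespace SimpleGraph

open Function

variable {V W α : Type*} {G : SimpleGraph V} {H : SimpleGraph W}

namespace Walk

variable {cV : V → α} {cE : Sym2 V → α} {u v w x : V}

theorem isTotalProper_iff (p : G.Walk u v) :
    p.IsTotalProper cV cE ↔ (p.totalColorSeq cV cE).IsTotalProper := Iff.rfl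

@[simp]
theorem totalColorSeq_nil : (nil : G.Walk u u).totalColorSeq cV cE = [] := by
  simp [totalColorSeq, List.interleave']

@[simp]
theorem totalColorSeq_cons_nil (h : G.Adj u v) :
    (cons h nil).totalColorSeq cV cE = [cE s(u, v)] := by
  simp [totalColorSeq, List.interleave']

theorem totalColorSeq_cons (h : G.Adj u x) (p : G.Walk x v) (hp : ¬p.Nil) :
    (cons h p).totalColorSeq cV cE = cE s(u, x) :: cV x :: p.totalColorSeq cV cE := by
  obtain ⟨y, h', q, rfl⟩ := not_nil_iff.mp hp
  simp [totalColorSeq, List.interleave', List.dropLast_cons_of_ne_nil q.support_ne_nil]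

@[simp]
theorem totalColorSeq_copy (p : G.Walk u v) {u' v' : V} (hu : u = u') (hv : v = v') :
    (p.copy hu hv).totalColorSeq cV cE = p.totalColorSeq cV cE := by
  subst hu hv; rfl

theorem length_totalColorSeq (p : G.Walk u v) :
    (p.totalColorSeq cV cE).length = 2 * p.length - 1 := by
  simp only [totalColorSeq, List.length_interleave', List.length_map, length_edges,
    List.length_dropLast, List.length_tail, length_support]
  omega

theorem totalColorSeq_map (f : G →g H) (p : G.Walk u v) {cV : W → α} {cE : Sym2 W → α} :
    (p.map f).totalColorSeq cV cE = p.totalColorSeq (cV ∘ f) (cE ∘ Sym2.map f) := by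
  simp [totalColorSeq, edges_map, support_map, List.map_tail, List.map_dropLast]

theorem totalColorSeq_append (p : G.Walk u v) (q : G.Walk v w) (hp : ¬p.Nil) (hq : ¬q.Nil) :
    (p.append q).totalColorSeq cV cE = p.totalColorSeq cV cE ++ cV v :: q.totalColorSeq cV cE := by
  induction p with
  | nil => exact absurd .nil hp
  | cons h p ih =>
    by_cases hp' : p.Nil
    · cases hp'
      simp [totalColorSeq_cons _ _ hq]
    · rw [cons_append, totalColorSeq_cons _ _ (by simp [nil_append_iff, hp']),
        totalColorSeq_cons _ _ hp', ih q hp' hq]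
      rfl

theorem totalColorSeq_reverse (p : G.Walk u v) :
    p.reverse.totalColorSeq cV cE = (p.totalColorSeq cV cE).reverse := by
  induction p with
  | nil => simp
  | cons h p ih =>
    by_cases hp : p.Nil
    · cases hp
      simp [Sym2.eq_swap]
    · rw [reverse_cons, totalColorSeq_append _ _ (by simpa [nil_reverse] using hp) (by simp),
        totalColorSeq_cons _ _ hp, ih]
      simp [Sym2.eq_swap]

theorem IsTotalProper.reverse {p : G.Walk u v} (h : p.IsTotalProper cV cE) :
    p.reverse.IsTotalProper cV cE := by
  rw [isTotalProper_iff, totalColorSeq_reverse]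
  exact List.IsTotalProper.reverse h

theorem two_le_length_of_not_adj {p : G.Walk u v} (huv : u ≠ v) (hadj : ¬G.Adj u v) :
    2 ≤ p.length := by
  by_contra! hlen
  interval_cases h : p.length
  · exact huv (eq_of_length_eq_zero h)
  · exact hadj (adj_of_length_eq_one h)

end Walk

section Coloring

variable {cV : V → α} {cE : Sym2 V → α}

theorem IsTPCColoring.of_lt [LinearOrder V]
    (h : ∀ u v, u < v → ∃ p : G.Walk u v, p.IsPath ∧ p.IsTotalProper cV cE) :
    G.IsTPCColoring cV cE := by
  intro u v huv
  rcases huv.lt_or_gt with hlt | hgt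
  · exact h u v hlt
  · obtain ⟨p, hp, hprop⟩ := h v u hgt
    exact ⟨p.reverse, hp.reverse, hprop.reverse⟩

theorem IsTPCColoring.connected [Nonempty V] (h : G.IsTPCColoring cV cE) : G.Connected := by
  refine ⟨fun u v => ?_⟩
  by_cases huv : u = v
  · exact huv ▸ Reachable.refl u
  · obtain ⟨p, -⟩ := h u v huv
    exact ⟨p⟩

theorem IsTPCColoring.of_comap {cV : W → α} {cE : Sym2 W → α} (f : G →g H) (hf : Bijective f)
    (h : G.IsTPCColoring (cV ∘ f) (cE ∘ Sym2.map f)) : H.IsTPCColoring cV cE := by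
  intro u v huv
  obtain ⟨u, rfl⟩ := hf.2 u
  obtain ⟨v, rfl⟩ := hf.2 v
  obtain ⟨p, hp, hprop⟩ := h u v (ne_of_apply_ne f huv)
  exact ⟨p.map f, hp.map hf.1, by rwa [Walk.isTotalProper_iff, Walk.totalColorSeq_map]⟩

end Coloring

def TPCColorable (G : SimpleGraph V) (k : ℕ) : Prop :=
  ∃ (cV : V → Fin k) (cE : Sym2 V → Fin k), G.IsTPCColoring cV cE

variable {k : ℕ}

theorem TPCColorable.of_bijective (f : G →g H) (hf : Bijective f) (h : G.TPCColorable k) :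
    H.TPCColorable k := by
  obtain ⟨cV, cE, h⟩ := h
  let e := Equiv.ofBijective f hf
  refine ⟨cV ∘ e.symm, cE ∘ Sym2.map e.symm, IsTPCColoring.of_comap f hf ?_⟩
  convert h using 2 <;> funext x
  · simp [e]
  · simp [e, Sym2.map_map]

theorem TPCColorable.connected [Nonempty V] (h : G.TPCColorable k) : G.Connected :=
  let ⟨_, _, h⟩ := h
  h.connected

theorem TPCColorable.three_le {u v : V} (h : G.TPCColorable k) (huv : u ≠ v)
    (hadj : ¬G.Adj u v) : 3 ≤ k := by
  obtain ⟨cV, cE, h⟩ := h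
  obtain ⟨p, -, hp⟩ := h u v huv
  have hlen := p.two_le_length_of_not_adj huv hadj
  simpa using List.IsTotalProper.three_le_card hp (by rw [Walk.length_totalColorSeq]; omega)

theorem tpc_eq_three {u v : V} (h : G.TPCColorable 3) (huv : u ≠ v) (hadj : ¬G.Adj u v) :
    G.tpc = 3 :=
  le_antisymm (Nat.sInf_le h) (le_csInf ⟨3, h⟩ fun _ hk => TPCColorable.three_le hk huv hadj)

end SimpleGraph

namespace SimpleGraph.pathGraph

open Function

variable {n : ℕ}

def walkUp (n : ℕ) : ∀ (i d : ℕ) (h : i + d + 1 < n),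
    (pathGraph n).Walk ⟨i, by omega⟩ ⟨i + d + 1, h⟩
  | i, 0, _ => .cons (pathGraph_adj.mpr (.inl rfl)) .nil
  | i, d + 1, h => .cons (v := ⟨i + 1, by omega⟩) (pathGraph_adj.mpr (.inl rfl))
      ((walkUp n (i + 1) d (by omega)).copy rfl (Fin.ext (by simp; omega)))

theorem le_of_mem_support_walkUp {i d : ℕ} {h : i + d + 1 < n} {x : Fin n}
    (hx : x ∈ (walkUp n i d h).support) : i ≤ x := by
  induction d generalizing i with
  | zero =>
    simp only [walkUp, Walk.support_cons, Walk.support_nil, List.mem_cons, List.mem_nil_iff,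
      or_false] at hx
    rcases hx with rfl | rfl
    · exact le_rfl
    · exact Nat.le_succ_of_le le_rfl
  | succ d ih =>
    simp only [walkUp, Walk.support_cons, Walk.support_copy, List.mem_cons] at hx
    rcases hx with rfl | hx
    · simp
    · exact (ih hx).trans' (by omega)

theorem isPath_walkUp (i d : ℕ) (h : i + d + 1 < n) : (walkUp n i d h).IsPath := by
  induction d generalizing i with
  | zero => simp [walkUp]
  | succ d ih =>
    rw [walkUp, Walk.cons_isPath_iff, Walk.isPath_copy, Walk.support_copy]
    refine ⟨ih _ _, fun hx => ?_⟩
    simpa using le_of_mem_support_walkUp hx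

theorem not_nil_walkUp (i d : ℕ) (h : i + d + 1 < n) : ¬(walkUp n i d h).Nil :=
  Walk.not_nil_of_ne (by rw [ne_eq, Fin.mk.injEq]; omega)

def vertexColor (n : ℕ) (j : Fin n) : Fin 3 := Fin.ofNat 3 (2 * j)

def edgeColor (n : ℕ) : Sym2 (Fin n) → Fin 3 :=
  Sym2.lift ⟨fun a b => Fin.ofNat 3 (a + b), fun _ _ => congrArg _ (Nat.add_comm _ _)⟩

theorem getElem_totalColorSeq_walkUp (i d : ℕ) (h : i + d + 1 < n) (k : ℕ)
    (hk : k < ((walkUp n i d h).totalColorSeq (vertexColor n) (edgeColor n)).length) :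
    ((walkUp n i d h).totalColorSeq (vertexColor n) (edgeColor n))[k] =
      Fin.ofNat 3 (2 * i + 1 + k) := by
  induction d generalizing i k with
  | zero =>
    simp only [walkUp, Walk.totalColorSeq_cons_nil, List.length_singleton] at hk ⊢
    obtain rfl : k = 0 := by omega
    simp only [List.getElem_cons_zero, edgeColor, Sym2.lift_mk, Fin.ext_iff, Fin.val_ofNat]
    omega
  | succ d ih =>
    simp only [walkUp, Walk.totalColorSeq_cons, Walk.nil_copy, not_nil_walkUp, not_false_eq_true,
      Walk.totalColorSeq_copy] at hk ⊢
    rcases k with _ | _ | k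
    · simp only [List.getElem_cons_zero, edgeColor, Sym2.lift_mk, Fin.ext_iff, Fin.val_ofNat]
      omega
    · simp only [List.getElem_cons_succ, List.getElem_cons_zero, vertexColor, Fin.ext_iff,
        Fin.val_ofNat]
      omega
    · simp only [List.getElem_cons_succ]
      rw [ih (i + 1) _ k]
      congr 1
      omega

theorem isTPCColoring (n : ℕ) : (pathGraph n).IsTPCColoring (vertexColor n) (edgeColor n) := by
  refine IsTPCColoring.of_lt fun u v huv => ?_
  obtain ⟨d, hd⟩ : ∃ d, (v : ℕ) = u + d + 1 := ⟨v - u - 1, by omega⟩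
  refine ⟨(walkUp n u d (hd ▸ v.2)).copy rfl (Fin.ext hd.symm), ?_, ?_⟩
  · rw [Walk.isPath_copy]
    exact isPath_walkUp ..
  · rw [Walk.isTotalProper_iff, Walk.totalColorSeq_copy]
    exact List.isTotalProper_of_getElem_eq_add _ (getElem_totalColorSeq_walkUp _ _ _)

theorem tpcColorable_three (n : ℕ) : (pathGraph n).TPCColorable 3 :=
  ⟨_, _, isTPCColoring n⟩

def homCompl (n : ℕ) (hn : 4 ≤ n) : pathGraph n →g (pathGraph n)ᶜ where
  toFun i := ⟨if (i : ℕ) < n / 2 then 2 * i + 1 else 2 * (i - n / 2), by split_ifs <;> omega⟩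
  map_rel' {i j} hij := by
    rw [pathGraph_adj] at hij
    simp only [compl_adj, pathGraph_adj, ne_eq, Fin.ext_iff]
    split_ifs <;> omega

theorem bijective_homCompl (n : ℕ) (hn : 4 ≤ n) : Bijective (homCompl n hn) := by
  refine Finite.injective_iff_bijective.mp fun i j hij => ?_
  simp only [homCompl, RelHom.coeFn_mk, Fin.ext_iff] at hij
  ext
  split_ifs at hij <;> omega

end SimpleGraph.pathGraph

open SimpleGraph in
theorem tpc_lower_bound_sharp :
    ∀ n : ℕ, 4 ≤ n → ∃ G : SimpleGraph (Fin n),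
      G.Connected ∧ Gᶜ.Connected ∧ G.tpc = 3 ∧ Gᶜ.tpc = 3 := by
  intro n hn
  have : Nonempty (Fin n) := ⟨⟨0, by omega⟩⟩
  have hP := pathGraph.tpcColorable_three n
  have hC := hP.of_bijective _ (pathGraph.bijective_homCompl n hn)
  refine ⟨pathGraph n, hP.connected, hC.connected, ?_, ?_⟩
  · exact tpc_eq_three hP (u := ⟨0, by omega⟩) (v := ⟨2, by omega⟩) (by simp)
      (by simp [pathGraph_adj])
  · exact tpc_eq_three hC (u := ⟨0, by omega⟩) (v := ⟨1, by omega⟩) (by simp)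
      (by simp [pathGraph_adj])
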